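/- arXiv:1905.06828 — 4 statements merged into one kernel-verified Lean document; each statement's English description precedes it below -/
import Mathlib

section
/- For q > 1 with q ≠ 2, the function k(z) = (1 - |z|^(q-1)·sgn(z))/(1 - z) is bounded on [-1, 1): there exist constants 0 < d_lo ≤ d_up (depending only on q) such that d_lo ≤ k(z) ≤ d_up for all z ∈ [-1, 1). -/
/-- For `q > 1`, `q ≠ 2`, the function `k z = (1 - |z|^(q-1) * sgn z)/(1 - z)` is
bounded below and above by positive constants on `[-1, 1)`. -/
theorem stmt_2 (q : ℝ) (hq : 1 < q) (hq2 : q ≠ 2) :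
    ∃ dlo dup : ℝ, 0 < dlo ∧ dlo ≤ dup ∧
      ∀ z ∈ Set.Ico (-1 : ℝ) 1,
        dlo ≤ (1 - |z| ^ (q - 1) * Real.sign z) / (1 - z) ∧
        (1 - |z| ^ (q - 1) * Real.sign z) / (1 - z) ≤ dup := by
  set p : ℝ := q - 1 with hp
  have hp0 : 0 < p := by simp [hp]; linarith
  refine ⟨min (1/2) (min p 1), max 2 (max p 1), ?_, ?_, ?_⟩
  · positivity
  · calc min (1/2) (min p 1) ≤ 1 := le_trans (min_le_right _ _) (min_le_right _ _)
      _ ≤ max 2 (max p 1) := le_trans (by norm_num) (le_max_left _ _)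
  intro z hz
  obtain ⟨hz1, hz2⟩ := hz
  have hden : 0 < 1 - z := by linarith
  rcases lt_trichotomy z 0 with hzn | hz0 | hzp
  · -- z < 0
    have hsgn : Real.sign z = -1 := Real.sign_of_neg hzn
    have habs : |z| = -z := abs_of_neg hzn
    have habs1 : |z| ≤ 1 := by rw [habs]; linarith
    have hpow0 : 0 ≤ |z| ^ p := Real.rpow_nonneg (abs_nonneg z) p
    have hpow1 : |z| ^ p ≤ 1 := Real.rpow_le_one (abs_nonneg z) habs1 hp0.le
    rw [hsgn]
    have hnum : (1 : ℝ) - |z| ^ p * (-1) = 1 + |z| ^ p := by ring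
    rw [hnum]
    constructor
    · have h1 : min (1/2) (min p 1) ≤ 1/2 := min_le_left _ _
      have h2 : (1:ℝ)/2 ≤ (1 + |z| ^ p) / (1 - z) := by
        rw [div_le_div_iff₀ (by norm_num) hden]; nlinarith
      linarith
    · have h2 : (1 + |z| ^ p) / (1 - z) ≤ 2 := by
        rw [div_le_iff₀ hden]; nlinarith
      exact h2.trans (le_max_left _ _)
  · -- z = 0
    subst hz0
    simp only [Real.sign_zero, abs_zero, mul_zero, sub_zero, div_one]
    constructor
    · exact le_trans (min_le_right _ _) (min_le_right _ _)
    · exact le_trans (by norm_num) (le_max_left _ _)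
  · -- 0 < z
    have hsgn : Real.sign z = 1 := Real.sign_of_pos hzp
    have habs : |z| = z := abs_of_pos hzp
    rw [hsgn, habs, mul_one]
    have hs : (-1 : ℝ) ≤ z - 1 := by linarith
    rcases le_or_gt 1 p with h1p | hp1
    · -- p ≥ 1
      constructor
      · -- ratio ≥ 1
        have hzle : z ^ p ≤ z := by
          calc z ^ p ≤ z ^ (1:ℝ) :=
              Real.rpow_le_rpow_of_exponent_ge hzp hz2.le h1p
            _ = z := Real.rpow_one z
        have : (1:ℝ) ≤ (1 - z ^ p) / (1 - z) := by
          rw [le_div_iff₀ hden]; linarith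
        have hmin : min (1/2) (min p 1) ≤ 1 :=
          le_trans (min_le_right _ _) (min_le_right _ _)
        linarith
      · -- ratio ≤ p
        have hb : 1 + p * (z - 1) ≤ (1 + (z - 1)) ^ p :=
          one_add_mul_self_le_rpow_one_add hs h1p
        have hb' : 1 + p * (z - 1) ≤ z ^ p := by
          convert hb using 2; ring
        have : (1 - z ^ p) / (1 - z) ≤ p := by
          rw [div_le_iff₀ hden]; nlinarith
        have hmax : p ≤ max 2 (max p 1) := le_trans (le_max_left _ _) (le_max_right _ _)
        linarith
    · -- p < 1
      constructor
      · -- ratio ≥ p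
        have hb : (1 + (z - 1)) ^ p ≤ 1 + p * (z - 1) :=
          rpow_one_add_le_one_add_mul_self hs hp0.le hp1.le
        have hb' : z ^ p ≤ 1 + p * (z - 1) := by
          convert hb using 2; ring
        have : p ≤ (1 - z ^ p) / (1 - z) := by
          rw [le_div_iff₀ hden]; nlinarith
        have hmin : min (1/2) (min p 1) ≤ p :=
          le_trans (min_le_right _ _) (min_le_left _ _)
        linarith
      · -- ratio ≤ 1
        have hzle : z ≤ z ^ p := by
          calc z = z ^ (1:ℝ) := (Real.rpow_one z).symm
            _ ≤ z ^ p := Real.rpow_le_rpow_of_exponent_ge hzp hz2.le hp1.le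
        have : (1 - z ^ p) / (1 - z) ≤ 1 := by
          rw [div_le_one hden]; linarith
        have hmax : (1:ℝ) ≤ max 2 (max p 1) := le_trans (by norm_num) (le_max_left _ _)
        linarith
end

section
/- Let q > 1, q ≠ 2, and let g = h_q⁻¹ be the inverse of h_q(x) = x + |x|^(q-1)·sgn(x). There exist constants d_lo, d_up > 0 such that for all x₁ > 0 and x₂ with |x₂| ≤ x₁ and x₂ ≠ x₁: 1/(1 + d_up·g(x₁)^(q-2)) ≤ (g(x₁) - g(x₂))/(x₁ - x₂) ≤ 1/(1 + d_lo·g(x₁)^(q-2)). -/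
/-!
Write `h y = y + |y|^p sgn y` with `p = q - 1 > 0`; it is odd, strictly increasing and continuous
with `h y → ±∞`, so `g = h⁻¹`. For `y₁ = g x₁ > 0` and `y₂ = g x₂ = z y₁` with `-1 ≤ z < 1`,
homogeneity gives `h y₁ - h y₂ = (y₁ - y₂) (1 + y₁^(p-1) k(z))` with
`k(z) = (1 - |z|^p sgn z) / (1 - z)`. Bernoulli's inequality on `[0, 1]` and a crude estimate
on `[-1, 0]` bound `k` between `min 1 p / 2` and `2 max 1 p`, and inverting gives the claim.
-/

open Filter

noncomputable def signedRpow (p y : ℝ) : ℝ := |y| ^ p * Real.sign y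

noncomputable def idAddSignedRpow (p y : ℝ) : ℝ := y + signedRpow p y

section SignedRpow

variable {p : ℝ}

lemma signedRpow_neg (p y : ℝ) : signedRpow p (-y) = -signedRpow p y := by
  simp [signedRpow, Real.sign_neg]

lemma signedRpow_of_pos (p : ℝ) {y : ℝ} (hy : 0 < y) : signedRpow p y = y ^ p := by
  simp [signedRpow, abs_of_pos hy, Real.sign_of_pos hy]

lemma signedRpow_of_nonneg (hp : p ≠ 0) {y : ℝ} (hy : 0 ≤ y) : signedRpow p y = y ^ p := by
  rcases hy.eq_or_lt with rfl | hy
  · simp [signedRpow, Real.zero_rpow hp]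
  · exact signedRpow_of_pos p hy

lemma signedRpow_mul_of_pos (p : ℝ) {c : ℝ} (hc : 0 < c) (y : ℝ) :
    signedRpow p (c * y) = c ^ p * signedRpow p y := by
  have hsign : Real.sign (c * y) = Real.sign y := by
    rcases lt_trichotomy y 0 with hy | rfl | hy
    · rw [Real.sign_of_neg hy, Real.sign_of_neg (mul_neg_of_pos_of_neg hc hy)]
    · simp
    · rw [Real.sign_of_pos hy, Real.sign_of_pos (mul_pos hc hy)]
  rw [signedRpow, signedRpow, hsign, abs_mul, abs_of_pos hc,
    Real.mul_rpow hc.le (abs_nonneg y), mul_assoc]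

lemma monotone_signedRpow (hp : 0 ≤ p) : Monotone (signedRpow p) := by
  refine monotone_of_odd_of_monotoneOn_nonneg (signedRpow_neg p) fun a ha b hb hab => ?_
  rcases (Set.mem_Ici.mp ha).eq_or_lt with rfl | ha'
  · rcases (Set.mem_Ici.mp hb).eq_or_lt with rfl | hb'
    · rfl
    · rw [signedRpow_of_pos p hb']
      simp [signedRpow, Real.rpow_nonneg hb]
  · rw [signedRpow_of_pos p ha', signedRpow_of_pos p (ha'.trans_le hab)]
    exact Real.rpow_le_rpow ha hab hp

lemma signedRpow_eq_rpow_max_sub (hp : p ≠ 0) (y : ℝ) :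
    signedRpow p y = max y 0 ^ p - max (-y) 0 ^ p := by
  rcases le_total 0 y with hy | hy
  · rw [signedRpow_of_nonneg hp hy, max_eq_left hy, max_eq_right (neg_nonpos.mpr hy),
      Real.zero_rpow hp, sub_zero]
  · rw [← neg_neg y, signedRpow_neg, signedRpow_of_nonneg hp (neg_nonneg.mpr hy), neg_neg,
      max_eq_right hy, max_eq_left (neg_nonneg.mpr hy), Real.zero_rpow hp, zero_sub]

lemma continuous_signedRpow (hp : 0 < p) : Continuous (signedRpow p) := by
  rw [funext (signedRpow_eq_rpow_max_sub hp.ne')]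
  have hpow := Real.continuous_rpow_const hp.le
  exact (hpow.comp (continuous_id.max continuous_const)).sub
    (hpow.comp (continuous_neg.max continuous_const))

lemma idAddSignedRpow_zero (p : ℝ) : idAddSignedRpow p 0 = 0 := by
  simp [idAddSignedRpow, signedRpow]

lemma idAddSignedRpow_neg (p y : ℝ) : idAddSignedRpow p (-y) = -idAddSignedRpow p y := by
  rw [idAddSignedRpow, idAddSignedRpow, signedRpow_neg, neg_add]

lemma strictMono_idAddSignedRpow (hp : 0 ≤ p) : StrictMono (idAddSignedRpow p) :=
  strictMono_id.add_monotone (monotone_signedRpow hp)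

lemma surjective_idAddSignedRpow (hp : 0 < p) : Function.Surjective (idAddSignedRpow p) := by
  have hzero : signedRpow p 0 = 0 := by simp [signedRpow]
  refine Continuous.surjective (continuous_id.add (continuous_signedRpow hp)) ?_ ?_
  · refine tendsto_atTop_mono' _ ?_ tendsto_id
    filter_upwards [eventually_ge_atTop 0] with y hy
    simpa [idAddSignedRpow, hzero] using monotone_signedRpow hp.le hy
  · refine tendsto_atBot_mono' _ ?_ tendsto_id
    filter_upwards [eventually_le_atBot 0] with y hy
    simpa [idAddSignedRpow, hzero] using monotone_signedRpow hp.le hy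

end SignedRpow

section Bernoulli

variable {p z : ℝ}

lemma min_mul_one_sub_le_one_sub_rpow (hp : 0 < p) (hz₀ : 0 ≤ z) (hz₁ : z ≤ 1) :
    min 1 p * (1 - z) ≤ 1 - z ^ p := by
  rcases le_total p 1 with hp1 | hp1
  · have hbern := rpow_one_add_le_one_add_mul_self (s := z - 1) (by linarith) hp.le hp1
    rw [min_eq_right hp1]
    simp only [add_sub_cancel] at hbern
    linarith
  · have hle : z ^ p ≤ z ^ (1 : ℝ) :=
      Real.rpow_le_rpow_of_exponent_ge' hz₀ hz₁ zero_le_one hp1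
    rw [min_eq_left hp1, Real.rpow_one] at *
    linarith

lemma one_sub_rpow_le_max_mul_one_sub (hp : 0 < p) (hz₀ : 0 ≤ z) (hz₁ : z ≤ 1) :
    1 - z ^ p ≤ max 1 p * (1 - z) := by
  rcases le_total p 1 with hp1 | hp1
  · have hle : z ^ (1 : ℝ) ≤ z ^ p :=
      Real.rpow_le_rpow_of_exponent_ge' hz₀ hz₁ hp.le hp1
    rw [max_eq_left hp1, Real.rpow_one] at *
    linarith
  · have hbern := one_add_mul_self_le_rpow_one_add (s := z - 1) (by linarith) hp1
    rw [max_eq_right hp1]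
    simp only [add_sub_cancel] at hbern
    linarith

lemma min_mul_one_sub_le_one_sub_signedRpow (hp : 0 < p) (hz₁ : -1 ≤ z) (hz₂ : z ≤ 1) :
    min 1 p / 2 * (1 - z) ≤ 1 - signedRpow p z := by
  have hmin_pos : 0 < min 1 p := lt_min one_pos hp
  rcases le_total 0 z with hz₀ | hz₀
  · rw [signedRpow_of_nonneg hp.ne' hz₀]
    have := min_mul_one_sub_le_one_sub_rpow hp hz₀ hz₂
    nlinarith
  · rw [← neg_neg z, signedRpow_neg, signedRpow_of_nonneg hp.ne' (neg_nonneg.mpr hz₀), neg_neg]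
    have := Real.rpow_nonneg (neg_nonneg.mpr hz₀) p
    nlinarith [min_le_left 1 p]

lemma one_sub_signedRpow_le_max_mul_one_sub (hp : 0 < p) (hz₁ : -1 ≤ z) (hz₂ : z ≤ 1) :
    1 - signedRpow p z ≤ 2 * max 1 p * (1 - z) := by
  have hmax : 1 ≤ max 1 p := le_max_left 1 p
  rcases le_total 0 z with hz₀ | hz₀
  · rw [signedRpow_of_nonneg hp.ne' hz₀]
    have := one_sub_rpow_le_max_mul_one_sub hp hz₀ hz₂
    nlinarith
  · rw [← neg_neg z, signedRpow_neg, signedRpow_of_nonneg hp.ne' (neg_nonneg.mpr hz₀), neg_neg]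
    have := Real.rpow_le_one (neg_nonneg.mpr hz₀) (by linarith) hp.le
    nlinarith

end Bernoulli

section DifferenceQuotient

variable {p y₁ y₂ : ℝ}

lemma idAddSignedRpow_sub_mul (p : ℝ) {y : ℝ} (hy : 0 < y) (z : ℝ) :
    idAddSignedRpow p y - idAddSignedRpow p (y * z) =
      y * ((1 - z) + y ^ (p - 1) * (1 - signedRpow p z)) := by
  have hpow : y ^ p = y * y ^ (p - 1) := by
    conv_lhs => rw [show p = 1 + (p - 1) by ring, Real.rpow_add hy, Real.rpow_one]
  rw [idAddSignedRpow, idAddSignedRpow, signedRpow_mul_of_pos p hy, signedRpow_of_pos p hy, hpow]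
  ring

lemma mul_le_idAddSignedRpow_sub (hp : 0 < p) (hy₁ : 0 < y₁) (hy₂ : -y₁ ≤ y₂) (hle : y₂ ≤ y₁) :
    (y₁ - y₂) * (1 + min 1 p / 2 * y₁ ^ (p - 1)) ≤ idAddSignedRpow p y₁ - idAddSignedRpow p y₂ := by
  obtain ⟨z, rfl⟩ : ∃ z, y₂ = y₁ * z := ⟨y₂ / y₁, by field_simp⟩
  rw [idAddSignedRpow_sub_mul p hy₁,
    show (y₁ - y₁ * z) * (1 + min 1 p / 2 * y₁ ^ (p - 1)) =
      y₁ * ((1 - z) + y₁ ^ (p - 1) * (min 1 p / 2 * (1 - z))) by ring]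
  have hz : -1 ≤ z ∧ z ≤ 1 := by constructor <;> nlinarith
  gcongr
  exact min_mul_one_sub_le_one_sub_signedRpow hp hz.1 hz.2

lemma idAddSignedRpow_sub_le_mul (hp : 0 < p) (hy₁ : 0 < y₁) (hy₂ : -y₁ ≤ y₂) (hle : y₂ ≤ y₁) :
    idAddSignedRpow p y₁ - idAddSignedRpow p y₂ ≤ (y₁ - y₂) * (1 + 2 * max 1 p * y₁ ^ (p - 1)) := by
  obtain ⟨z, rfl⟩ : ∃ z, y₂ = y₁ * z := ⟨y₂ / y₁, by field_simp⟩
  rw [idAddSignedRpow_sub_mul p hy₁,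
    show (y₁ - y₁ * z) * (1 + 2 * max 1 p * y₁ ^ (p - 1)) =
      y₁ * ((1 - z) + y₁ ^ (p - 1) * (2 * max 1 p * (1 - z))) by ring]
  have hz : -1 ≤ z ∧ z ≤ 1 := by constructor <;> nlinarith
  gcongr
  exact one_sub_signedRpow_le_max_mul_one_sub hp hz.1 hz.2

lemma div_idAddSignedRpow_sub_mem_Icc (hp : 0 < p) (hy₁ : 0 < y₁) (hy₂ : -y₁ ≤ y₂)
    (hlt : y₂ < y₁) :
    1 / (1 + 2 * max 1 p * y₁ ^ (p - 1)) ≤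
        (y₁ - y₂) / (idAddSignedRpow p y₁ - idAddSignedRpow p y₂) ∧
      (y₁ - y₂) / (idAddSignedRpow p y₁ - idAddSignedRpow p y₂) ≤
        1 / (1 + min 1 p / 2 * y₁ ^ (p - 1)) := by
  have hpow : 0 < y₁ ^ (p - 1) := Real.rpow_pos_of_pos hy₁ _
  have hlo : 0 < 1 + min 1 p / 2 * y₁ ^ (p - 1) := by
    have := lt_min one_pos hp
    positivity
  have hup : 0 < 1 + 2 * max 1 p * y₁ ^ (p - 1) := by
    have := lt_max_of_lt_left (c := p) one_pos
    positivity
  have hsub : 0 < idAddSignedRpow p y₁ - idAddSignedRpow p y₂ :=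
    sub_pos.mpr (strictMono_idAddSignedRpow hp.le hlt)
  constructor
  · rw [div_le_div_iff₀ hup hsub, one_mul]
    exact idAddSignedRpow_sub_le_mul hp hy₁ hy₂ hlt.le
  · rw [div_le_div_iff₀ hsub hlo, one_mul]
    exact mul_le_idAddSignedRpow_sub hp hy₁ hy₂ hlt.le

end DifferenceQuotient

theorem stmt_3_general (q : ℝ) (hq : 1 < q) :
    letI g := Function.invFun (fun x : ℝ => x + |x| ^ (q - 1) * Real.sign x)
    ∃ dlo dup : ℝ, 0 < dlo ∧ 0 < dup ∧
      ∀ x₁ x₂ : ℝ, 0 < x₁ → |x₂| ≤ x₁ → x₂ ≠ x₁ →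
        1 / (1 + dup * g x₁ ^ (q - 2)) ≤ (g x₁ - g x₂) / (x₁ - x₂) ∧
        (g x₁ - g x₂) / (x₁ - x₂) ≤ 1 / (1 + dlo * g x₁ ^ (q - 2)) := by
  set g := Function.invFun (fun x : ℝ => x + |x| ^ (q - 1) * Real.sign x)
  have hp : 0 < q - 1 := sub_pos.mpr hq
  have hh := strictMono_idAddSignedRpow hp.le
  have hg (x : ℝ) : idAddSignedRpow (q - 1) (g x) = x :=
    Function.invFun_eq (surjective_idAddSignedRpow hp x)
  refine ⟨min 1 (q - 1) / 2, 2 * max 1 (q - 1), by have := lt_min one_pos hp; positivity,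
    by have := lt_max_of_lt_left (c := q - 1) one_pos; positivity, ?_⟩
  intro x₁ x₂ hx₁ hx₂ hne
  have hy₁ : 0 < g x₁ := hh.lt_iff_lt.mp (by rw [idAddSignedRpow_zero, hg]; exact hx₁)
  have hy₂ : -g x₁ ≤ g x₂ :=
    hh.le_iff_le.mp (by rw [idAddSignedRpow_neg, hg, hg]; linarith [neg_abs_le x₂])
  have hlt : g x₂ < g x₁ :=
    hh.lt_iff_lt.mp (by rw [hg, hg]; exact lt_of_le_of_ne ((le_abs_self x₂).trans hx₂) hne)
  have hexp : q - 1 - 1 = q - 2 := by ring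
  simpa only [hg, hexp] using div_idAddSignedRpow_sub_mem_Icc hp hy₁ hy₂ hlt

/-- Difference-quotient bounds for the inverse `g = h_q⁻¹` of
`h_q x = x + |x|^(q-1) * sgn x`, for `q > 1`, `q ≠ 2`. -/
theorem stmt_3 (q : ℝ) (hq : 1 < q) (hq2 : q ≠ 2) :
    letI g := Function.invFun (fun x : ℝ => x + |x| ^ (q - 1) * Real.sign x)
    ∃ dlo dup : ℝ, 0 < dlo ∧ 0 < dup ∧
      ∀ x₁ x₂ : ℝ, 0 < x₁ → |x₂| ≤ x₁ → x₂ ≠ x₁ →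
        1 / (1 + dup * g x₁ ^ (q - 2)) ≤ (g x₁ - g x₂) / (x₁ - x₂) ∧
        (g x₁ - g x₂) / (x₁ - x₂) ≤ 1 / (1 + dlo * g x₁ ^ (q - 2)) :=
  stmt_3_general q hq
end

section
/- Let A : X → Y be a bounded linear operator from a Banach space to a Hilbert space, R convex, and suppose x_α minimises (1/2)‖Ax − y‖² + αR(x) and x_α^δ minimises (1/2)‖Ax − y^δ‖² + αR(x), with subgradient ξ_α = −(1/α)A*(Ax_α − y) ∈ ∂R(x_α). Then the Bregman distance satisfies D_{ξ_α}(x_α^δ, x_α) ≤ (1/α)⟨Δy − Δp_α, Δp_α⟩, where Δy = y^δ − y, Δp_α = (y^δ − Ax_α^δ) − (y − Ax_α). -/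
/-!
Along the segment from `x_α^δ` to `x_α`, the Tikhonov functional for `y^δ` is bounded above by a
quadratic in the step `t` (convexity of `R`), so minimality of `x_α^δ` forces the slope at `t = 0⁺`
to be nonnegative: `⟪A x_α^δ - y^δ, A (x_α - x_α^δ)⟫ + α (R x_α - R x_α^δ) ≥ 0`.
Since `Δy - Δp_α = A (x_α^δ - x_α)` and `Δp_α = (A x_α - y) - (A x_α^δ - y^δ)`, the claim is this
inequality divided by `α`.
-/

open RealInnerProductSpace Filter Topology

lemma nonneg_of_forall_mul_add_sq_mul_nonneg {a b : ℝ}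
    (h : ∀ t : ℝ, 0 < t → t ≤ 1 → 0 ≤ t * a + t ^ 2 * b) : 0 ≤ a := by
  have hlim : Tendsto (fun t : ℝ => a + t * b) (𝓝[>] 0) (𝓝 a) := by
    have : Continuous fun t : ℝ => a + t * b := by fun_prop
    exact (this.tendsto' 0 a (by simp)).mono_left nhdsWithin_le_nhds
  have hev : ∀ᶠ t in 𝓝[>] (0 : ℝ), 0 ≤ a + t * b := by
    filter_upwards [Ioc_mem_nhdsGT one_pos] with t ⟨ht, ht1⟩
    exact (mul_nonneg_iff_of_pos_left ht).1 (by linarith [h t ht ht1])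
  exact ge_of_tendsto hlim hev

/-- First-order optimality condition for a minimiser of `½‖A x - y‖² + J x` with `J` convex. -/
theorem inner_add_sub_nonneg_of_isMin_sq_norm_add {X Y : Type*}
    [NormedAddCommGroup X] [NormedSpace ℝ X] [NormedAddCommGroup Y] [InnerProductSpace ℝ Y]
    (A : X →L[ℝ] Y) {J : X → ℝ} (hJ : ConvexOn ℝ Set.univ J) {y : Y} {x₀ : X}
    (hmin : ∀ x : X, (1 / 2) * ‖A x₀ - y‖ ^ 2 + J x₀ ≤ (1 / 2) * ‖A x - y‖ ^ 2 + J x)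
    (x : X) : 0 ≤ ⟪A x₀ - y, A (x - x₀)⟫ + (J x - J x₀) := by
  refine nonneg_of_forall_mul_add_sq_mul_nonneg (b := ‖A (x - x₀)‖ ^ 2 / 2) fun t ht ht1 => ?_
  have hJt : J (x₀ + t • (x - x₀)) ≤ (1 - t) * J x₀ + t * J x := by
    have h := hJ.2 (Set.mem_univ x₀) (Set.mem_univ x) (sub_nonneg.2 ht1) ht.le (by ring)
    rwa [show (1 - t) • x₀ + t • x = x₀ + t • (x - x₀) by module] at h
  have hnorm : ‖A (x₀ + t • (x - x₀)) - y‖ ^ 2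
      = ‖A x₀ - y‖ ^ 2 + 2 * (t * ⟪A x₀ - y, A (x - x₀)⟫) + t ^ 2 * ‖A (x - x₀)‖ ^ 2 := by
    rw [map_add, map_smul, add_sub_right_comm, norm_add_sq_real, real_inner_smul_right,
      norm_smul, mul_pow, Real.norm_eq_abs, sq_abs]
  have := hmin (x₀ + t • (x - x₀))
  rw [hnorm] at this
  linarith

theorem stmt_10_general {X Y : Type*} [NormedAddCommGroup X] [NormedSpace ℝ X]
    [NormedAddCommGroup Y] [InnerProductSpace ℝ Y]
    (A : X →L[ℝ] Y) (R : X → ℝ) (hR : ConvexOn ℝ Set.univ R)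
    (α : ℝ) (hα : 0 < α) (y yδ : Y) (xα xαδ : X)
    (hminδ : ∀ x : X, (1 / 2) * ‖A xαδ - yδ‖ ^ 2 + α * R xαδ ≤
      (1 / 2) * ‖A x - yδ‖ ^ 2 + α * R x) :
    -- `D_{ξ_α}(x_α^δ, x_α) = R x_α^δ - R x_α - ⟨ξ_α, x_α^δ - x_α⟩` with
    -- `⟨ξ_α, u⟩ = -(1/α) ⟪A x_α - y, A u⟫`
    R xαδ - R xα + (1 / α) * ⟪A xα - y, A xαδ - A xα⟫ ≤
      (1 / α) * ⟪(yδ - y) - ((yδ - A xαδ) - (y - A xα)),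
        (yδ - A xαδ) - (y - A xα)⟫ := by
  have hopt := inner_add_sub_nonneg_of_isMin_sq_norm_add A (hR.smul hα.le) hminδ xα
  have hinner : ⟪(yδ - y) - ((yδ - A xαδ) - (y - A xα)), (yδ - A xαδ) - (y - A xα)⟫
      = ⟪A xα - y, A xαδ - A xα⟫ + ⟪A xαδ - yδ, A (xα - xαδ)⟫ := by
    rw [show (yδ - y) - ((yδ - A xαδ) - (y - A xα)) = A xαδ - A xα by abel,
      show (yδ - A xαδ) - (y - A xα) = (A xα - y) - (A xαδ - yδ) by abel, map_sub,
      inner_sub_right, real_inner_comm, ← neg_sub (A xαδ), inner_neg_right,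
      real_inner_comm (A xαδ - yδ)]
    ring
  have hscaled : 0 ≤ (1 / α) * ⟪A xαδ - yδ, A (xα - xαδ)⟫ + (R xα - R xαδ) := by
    have := div_nonneg hopt hα.le
    simp only [smul_eq_mul, ← mul_sub] at this
    rwa [add_div, mul_div_cancel_left₀ _ hα.ne', div_eq_inv_mul, ← one_div] at this
  rw [hinner, mul_add]
  linarith

/-- Bound on the data propagation error in the Bregman distance:
`D_{ξ_α}(x_α^δ, x_α) ≤ (1/α) ⟪Δy - Δp_α, Δp_α⟫` where
`ξ_α = -(1/α) A*(A x_α - y) ∈ ∂R(x_α)`, `Δy = y^δ - y`, and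
`Δp_α = (y^δ - A x_α^δ) - (y - A x_α)`. -/
theorem stmt_10 {X Y : Type*} [NormedAddCommGroup X] [NormedSpace ℝ X]
    [NormedAddCommGroup Y] [InnerProductSpace ℝ Y] [CompleteSpace Y]
    (A : X →L[ℝ] Y) (R : X → ℝ) (hR : ConvexOn ℝ Set.univ R)
    (α : ℝ) (hα : 0 < α) (y yδ : Y) (xα xαδ : X)
    (hmin : ∀ x : X, (1 / 2) * ‖A xα - y‖ ^ 2 + α * R xα ≤
      (1 / 2) * ‖A x - y‖ ^ 2 + α * R x)
    (hminδ : ∀ x : X, (1 / 2) * ‖A xαδ - yδ‖ ^ 2 + α * R xαδ ≤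
      (1 / 2) * ‖A x - yδ‖ ^ 2 + α * R x) :
    -- `D_{ξ_α}(x_α^δ, x_α) = R x_α^δ - R x_α - ⟨ξ_α, x_α^δ - x_α⟩` with
    -- `⟨ξ_α, u⟩ = -(1/α) ⟪A x_α - y, A u⟫`
    R xαδ - R xα + (1 / α) * ⟪A xα - y, A xαδ - A xα⟫ ≤
      (1 / α) * ⟪(yδ - y) - ((yδ - A xαδ) - (y - A xα)),
        (yδ - A xαδ) - (y - A xα)⟫ :=
  stmt_10_general A R hR α hα y yδ xα xαδ hminδ
end

section
/- Under the source condition ξ = A*w ∈ ∂R(x†), for x_α^δ minimising the Tikhonov functional with data y^δ satisfying ‖y^δ − Ax†‖ ≤ δ, we have D_ξ(x_α^δ, x†) ≤ (1/2)(δ/√α + √α·‖w‖)² and ‖Ax_α^δ − y^δ‖ ≤ δ + 2‖w‖α. -/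
/-!
Testing the Tikhonov functional against `x†` bounds `½‖Ax_α^δ - y^δ‖² + α R(x_α^δ)` by
`½δ² + α R(x†)`. The source condition turns `R(x_α^δ) - R(x†)` into the Bregman distance plus
`⟪w, A(x_α^δ - x†)⟫`, and Cauchy–Schwarz bounds that pairing below by `-‖w‖(r + δ)` with
`r = ‖Ax_α^δ - y^δ‖`. Completing the square gives `½(r - α‖w‖)² + α D ≤ ½(δ + α‖w‖)²`;
since `D ≥ 0`, both claimed bounds can be read off.
-/

open RealInnerProductSpace

section Tikhonov

variable {X Y : Type*} [NormedAddCommGroup X] [NormedSpace ℝ X]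
  [NormedAddCommGroup Y] [InnerProductSpace ℝ Y]

theorem neg_norm_mul_le_inner_map_sub (A : X →L[ℝ] Y) (w y : Y) (x x₀ : X) :
    -(‖w‖ * (‖A x - y‖ + ‖y - A x₀‖)) ≤ ⟪w, A (x - x₀)⟫ := by
  have hA : ‖A (x - x₀)‖ ≤ ‖A x - y‖ + ‖y - A x₀‖ := by
    rw [map_sub]
    exact norm_sub_le_norm_sub_add_norm_sub _ _ _
  calc -(‖w‖ * (‖A x - y‖ + ‖y - A x₀‖))
      ≤ -(‖w‖ * ‖A (x - x₀)‖) := by gcongr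
    _ ≤ ⟪w, A (x - x₀)⟫ := neg_le_of_abs_le (abs_real_inner_le_norm _ _)

theorem tikhonov_completed_square (A : X →L[ℝ] Y) (R : X → ℝ) {α δ : ℝ} (hα : 0 < α)
    {x₀ : X} {w yδ : Y} (hnoise : ‖yδ - A x₀‖ ≤ δ) {x : X}
    (hmin : (1 / 2) * ‖A x - yδ‖ ^ 2 + α * R x ≤ (1 / 2) * ‖A x₀ - yδ‖ ^ 2 + α * R x₀) :
    (1 / 2) * (‖A x - yδ‖ - α * ‖w‖) ^ 2 + α * (R x - R x₀ - ⟪w, A (x - x₀)⟫) ≤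
      (1 / 2) * (δ + α * ‖w‖) ^ 2 := by
  have hdata : ‖A x₀ - yδ‖ ^ 2 ≤ δ ^ 2 := by
    rw [norm_sub_rev]
    exact pow_le_pow_left₀ (norm_nonneg _) hnoise 2
  have hpair := mul_le_mul_of_nonneg_left
    (neg_norm_mul_le_inner_map_sub A w yδ x x₀) hα.le
  have hnoise_w := mul_le_mul_of_nonneg_left hnoise (mul_nonneg hα.le (norm_nonneg w))
  nlinarith

end Tikhonov

theorem le_add_two_mul_of_half_sq_sub_add_le {r δ c d : ℝ} (hd : 0 ≤ d) (hδc : 0 ≤ δ + c)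
    (h : (1 / 2) * (r - c) ^ 2 + d ≤ (1 / 2) * (δ + c) ^ 2) : r ≤ δ + 2 * c := by
  have := (abs_le_of_sq_le_sq' (a := r - c) (by linarith) hδc).2
  linarith

theorem sq_div_sqrt_add_sqrt_mul {α : ℝ} (hα : 0 < α) (δ b : ℝ) :
    (δ / Real.sqrt α + Real.sqrt α * b) ^ 2 = (δ + α * b) ^ 2 / α := by
  have hs : Real.sqrt α ^ 2 = α := Real.sq_sqrt hα.le
  field_simp
  rw [hs]
  ring

theorem stmt_12_general {X Y : Type*} [NormedAddCommGroup X] [NormedSpace ℝ X]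
    [NormedAddCommGroup Y] [InnerProductSpace ℝ Y]
    (A : X →L[ℝ] Y) (R : X → ℝ)
    (α δ : ℝ) (hα : 0 < α) (xdag : X) (w : Y)
    (hsrc : ∀ u : X, R xdag + ⟪w, A (u - xdag)⟫ ≤ R u)
    (yδ : Y) (hnoise : ‖yδ - A xdag‖ ≤ δ) (xαδ : X)
    (hmin : ∀ x : X, (1 / 2) * ‖A xαδ - yδ‖ ^ 2 + α * R xαδ ≤
      (1 / 2) * ‖A x - yδ‖ ^ 2 + α * R x) :
    R xαδ - R xdag - ⟪w, A (xαδ - xdag)⟫ ≤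
      (1 / 2) * (δ / Real.sqrt α + Real.sqrt α * ‖w‖) ^ 2 ∧
    ‖A xαδ - yδ‖ ≤ δ + 2 * ‖w‖ * α := by
  have hbregman : 0 ≤ R xαδ - R xdag - ⟪w, A (xαδ - xdag)⟫ := by linarith [hsrc xαδ]
  have hsq := tikhonov_completed_square A R hα (w := w) hnoise (hmin xdag)
  have hδ : 0 ≤ δ := (norm_nonneg _).trans hnoise
  refine ⟨?_, ?_⟩
  · rw [sq_div_sqrt_add_sqrt_mul hα, mul_div_assoc', le_div_iff₀ hα]
    nlinarith [sq_nonneg (‖A xαδ - yδ‖ - α * ‖w‖)]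
  · have := le_add_two_mul_of_half_sq_sub_add_le (mul_nonneg hα.le hbregman) (by positivity) hsq
    linarith

/-- Under the source condition `ξ = A* w ∈ ∂R(x†)`, the noisy-data Tikhonov
minimiser `x_α^δ` with `‖y^δ - A x†‖ ≤ δ` satisfies
`D_ξ(x_α^δ, x†) ≤ (1/2)(δ/√α + √α ‖w‖)²` and `‖A x_α^δ - y^δ‖ ≤ δ + 2 ‖w‖ α`. -/
theorem stmt_12 {X Y : Type*} [NormedAddCommGroup X] [NormedSpace ℝ X]
    [NormedAddCommGroup Y] [InnerProductSpace ℝ Y] [CompleteSpace Y]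
    (A : X →L[ℝ] Y) (R : X → ℝ) (hR : ConvexOn ℝ Set.univ R)
    (α δ : ℝ) (hα : 0 < α) (hδ : 0 ≤ δ) (xdag : X) (w : Y)
    (hsrc : ∀ u : X, R xdag + ⟪w, A (u - xdag)⟫ ≤ R u)
    (yδ : Y) (hnoise : ‖yδ - A xdag‖ ≤ δ) (xαδ : X)
    (hmin : ∀ x : X, (1 / 2) * ‖A xαδ - yδ‖ ^ 2 + α * R xαδ ≤
      (1 / 2) * ‖A x - yδ‖ ^ 2 + α * R x) :
    R xαδ - R xdag - ⟪w, A (xαδ - xdag)⟫ ≤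
      (1 / 2) * (δ / Real.sqrt α + Real.sqrt α * ‖w‖) ^ 2 ∧
    ‖A xαδ - yδ‖ ≤ δ + 2 * ‖w‖ * α :=
  stmt_12_general A R α δ hα xdag w hsrc yδ hnoise xαδ hmin
end
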